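/- arXiv:math/0604231 — 3 statements merged into one kernel-verified Lean document; each statement's English description precedes it below -/
import Mathlib

section
/- Let H ⊆ ℝ^n be a hyperplane with closed half-spaces H₋ and H₊, let D ⊆ H₋ be a compact convex set, let F = D ∩ H, and let p ∈ H₊ \ H. If for every x ∈ D the segment [x,p] crosses H inside F, then the union D ∪ Cone_p(F) is convex, where Cone_p(F) is the union of segments from p to points of F. -/
open Set

lemma seg_union {E : Type*} [AddCommGroup E] [Module ℝ E] {x y w : E}
    (hw : w ∈ segment ℝ x y) : segment ℝ x y ⊆ segment ℝ x w ∪ segment ℝ w y := by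
  obtain ⟨s, t, hs, ht, hst, rfl⟩ := hw
  rintro z ⟨a, b, ha, hb, hab, rfl⟩
  rcases le_or_gt b t with hbt | htb
  · left
    rcases eq_or_lt_of_le ht with ht0 | ht0
    · have hb0 : b = 0 := le_antisymm (ht0 ▸ hbt) hb
      have hs1 : s = 1 := by linarith
      have ha1 : a = 1 := by linarith
      refine ⟨1, 0, zero_le_one, le_refl 0, by ring, ?_⟩
      simp [hb0, hs1, ha1]
    · refine ⟨a - b * s / t, b / t, ?_, by positivity, ?_, ?_⟩
      · rw [sub_nonneg, div_le_iff₀ ht0]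
        nlinarith
      · field_simp
        linear_combination t * hab - b * hst
      · rw [smul_add, smul_smul, smul_smul, ← add_assoc, ← add_smul]
        congr 1
        · field_simp
          congr 1
          rw [div_eq_iff ht0.ne']
          ring
        · field_simp
  · right
    have hs0 : 0 < s := by nlinarith
    refine ⟨a / s, b - a * t / s, by positivity, ?_, ?_, ?_⟩
    · rw [sub_nonneg, div_le_iff₀ hs0]
      nlinarith
    · field_simp
      linear_combination s * hab - a * hst
    · rw [smul_add, smul_smul, smul_smul, add_assoc, ← add_smul]
      congr 1
      · field_simp
      · field_simp
        congr 1
        rw [div_eq_iff hs0.ne']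
        ring

theorem stmt_5 {n : ℕ} (f : (Fin n → ℝ) →ₗ[ℝ] ℝ) (hf : f ≠ 0) (c : ℝ)
    (D : Set (Fin n → ℝ)) (hDc : IsCompact D) (hDconv : Convex ℝ D)
    (hD : D ⊆ {x | f x ≤ c}) (p : Fin n → ℝ) (hp : c < f p)
    (F : Set (Fin n → ℝ)) (hF : F = D ∩ {x | f x = c})
    (hcross : ∀ x ∈ D, segment ℝ x p ∩ {x | f x = c} ⊆ F) :
    Convex ℝ (D ∪ ⋃ q ∈ F, segment ℝ p q) := by
  rcases D.eq_empty_or_nonempty with rfl | hne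
  · have hFe : F = ∅ := by simp [hF]
    simp [hFe, convex_empty]
  have hFD : F ⊆ D := by rw [hF]; exact inter_subset_left
  have key : D ∪ ⋃ q ∈ F, segment ℝ p q = convexHull ℝ (insert p D) := by
    apply Subset.antisymm
    · apply union_subset
      · exact (subset_insert _ _).trans (subset_convexHull ℝ _)
      · refine iUnion₂_subset fun q hq => ?_
        exact (convex_convexHull ℝ _).segment_subset
          (subset_convexHull ℝ _ (mem_insert _ _))
          (subset_convexHull ℝ _ (mem_insert_iff.mpr (Or.inr (hFD hq))))
    · rw [convexHull_insert hne, hDconv.convexHull_eq, convexJoin_singleton_left]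
      refine iUnion₂_subset fun x hx => ?_
      -- find crossing point w on segment p x
      have hfx : f x ≤ c := hD hx
      have hden : 0 < f p - f x := by linarith
      set t : ℝ := (f p - c) / (f p - f x) with ht
      have ht0 : 0 ≤ t := div_nonneg (by linarith) hden.le
      have ht1 : t ≤ 1 := by rw [div_le_one hden]; linarith
      set w : Fin n → ℝ := (1 - t) • p + t • x with hw
      have hwseg : w ∈ segment ℝ p x := ⟨1 - t, t, by linarith, ht0, by ring, rfl⟩
      have hfw : f w = c := by
        show f ((1 - t) • p + t • x) = c
        rw [map_add, map_smul, map_smul, smul_eq_mul, smul_eq_mul, ht]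
        field_simp
        ring
      have hwF : w ∈ F := by
        apply hcross x hx
        exact ⟨segment_symm ℝ p x ▸ hwseg, hfw⟩
      refine (seg_union hwseg).trans (union_subset ?_ ?_)
      · exact subset_union_right.trans' (subset_iUnion₂_of_subset w hwF Subset.rfl)
      · exact subset_union_left.trans' (hDconv.segment_subset (hFD hwF) hx)
  rw [key]
  exact convex_convexHull ℝ _
end

section
/- Under the hypotheses of the cone-union lemma, D ∪ Cone_p(F) equals Cone_p(D), the cone with tip p over D. -/
/-!
A segment `[p, s]` with `s ∈ D` crosses the hyperplane `f = c` at some point `q`, which lies in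
`F` by hypothesis. The segment splits at `q` into `[p, q] ⊆ Cone_p(F)` and `[q, s] ⊆ D`, the
latter by convexity of `D`.
-/

open Set AffineMap

theorem Wbtw.wbtw_or_wbtw_of_wbtw {R V P : Type*} [Field R] [LinearOrder R] [IsStrictOrderedRing R]
    [AddCommGroup V] [Module R V] [AddTorsor V P] {x y z w : P}
    (hy : Wbtw R x y z) (hw : Wbtw R x w z) : Wbtw R x y w ∨ Wbtw R x w y := by
  obtain ⟨t, ht, rfl⟩ := hy
  obtain ⟨u, hu, rfl⟩ := hw
  simpa only [lineMap_apply] using wbtw_or_wbtw_smul_vadd_of_nonneg x (z -ᵥ x) ht.1 hu.1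

section Segment

variable {𝕜 E : Type*} [Field 𝕜] [LinearOrder 𝕜] [IsStrictOrderedRing 𝕜] [AddCommGroup E]
  [Module 𝕜 E]

theorem segment_subset_union_of_mem_segment {x y z : E} (hz : z ∈ segment 𝕜 x y) :
    segment 𝕜 x y ⊆ segment 𝕜 x z ∪ segment 𝕜 z y := by
  intro w hw
  rw [mem_segment_iff_wbtw] at hz hw
  rcases hw.wbtw_or_wbtw_of_wbtw hz with h | h
  · exact Or.inl h.mem_segment
  · exact Or.inr (hw.trans_left_right h).mem_segment

theorem exists_mem_segment_apply_eq (f : E →ᵃ[𝕜] 𝕜) {x y : E} {c : 𝕜} (hx : f x ≤ c)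
    (hy : c ≤ f y) : ∃ z ∈ segment 𝕜 x y, f z = c := by
  have hc : c ∈ f '' segment 𝕜 x y := by
    rw [image_segment, segment_eq_Icc (hx.trans hy)]
    exact ⟨hx, hy⟩
  exact hc

end Segment

theorem stmt_6_general {n : ℕ} (f : (Fin n → ℝ) →ₗ[ℝ] ℝ) (c : ℝ)
    (D : Set (Fin n → ℝ)) (hDconv : Convex ℝ D)
    (hD : D ⊆ {x | f x ≤ c}) (p : Fin n → ℝ) (hp : c < f p)
    (F : Set (Fin n → ℝ)) (hF : F = D ∩ {x | f x = c})
    (hcross : ∀ x ∈ D, segment ℝ x p ∩ {x | f x = c} ⊆ F) :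
    D ∪ (⋃ q ∈ F, segment ℝ p q) = ⋃ s ∈ D, segment ℝ p s := by
  subst hF
  refine Subset.antisymm (union_subset ?_ ?_) ?_
  · exact fun s hs => mem_biUnion hs (right_mem_segment ℝ p s)
  · exact biUnion_mono inter_subset_left fun _ _ => Subset.rfl
  · refine iUnion₂_subset fun s hs => ?_
    obtain ⟨q, hqs, hfq⟩ := exists_mem_segment_apply_eq f.toAffineMap (hD hs) hp.le
    have hqF : q ∈ D ∩ {x | f x = c} := hcross s hs ⟨hqs, hfq⟩
    rw [segment_symm] at hqs
    refine (segment_subset_union_of_mem_segment hqs).trans (union_subset ?_ ?_)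
    · exact subset_union_right.trans' (subset_biUnion_of_mem hqF)
    · exact subset_union_left.trans' (hDconv.segment_subset hqF.1 hs)

theorem stmt_6 {n : ℕ} (f : (Fin n → ℝ) →ₗ[ℝ] ℝ) (hf : f ≠ 0) (c : ℝ)
    (D : Set (Fin n → ℝ)) (hDc : IsCompact D) (hDconv : Convex ℝ D)
    (hD : D ⊆ {x | f x ≤ c}) (p : Fin n → ℝ) (hp : c < f p)
    (F : Set (Fin n → ℝ)) (hF : F = D ∩ {x | f x = c})
    (hcross : ∀ x ∈ D, segment ℝ x p ∩ {x | f x = c} ⊆ F) :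
    D ∪ (⋃ q ∈ F, segment ℝ p q) = ⋃ s ∈ D, segment ℝ p s :=
  stmt_6_general f c D hDconv hD p hp F hF hcross
end

section
/- Let G₁ = {Diag(1, e^t) : t ∈ ℝ} ⊂ GL(2,ℝ) and G₃ = {Diag(e^t, 1) : t ∈ ℝ}. Then for any A₁ ∈ G₁, A₃ ∈ G₃, and any A₂ in the conjugate R_{π/4} G₁ R_{−π/4}, the product A₃A₂A₁ is a nontrivial rotation in SO(2) only if A₂ = I and A₃A₁ ∈ SO(2); in particular if A₃A₂A₁ ∈ SO(2) and A₂ ≠ I then A₃A₂A₁ = ±I is impossible unless all factors are trivial, so the product of three such matrices is never a nontrivial rotation. -/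
/-!
Conjugating `diag(1, eᵗ)` by a rotation gives a symmetric matrix with positive diagonal.
Multiplying it on both sides by positive diagonal matrices keeps its two off-diagonal entries
of the same sign, whereas in a rotation they are `-sin φ` and `sin φ`. Hence `sin φ = 0`, and the
positive `(0, 0)` entry forces `cos φ = 1`.
-/

open Real Matrix

noncomputable def rotMat (φ : ℝ) : Matrix (Fin 2) (Fin 2) ℝ :=
  !![Real.cos φ, -Real.sin φ; Real.sin φ, Real.cos φ]

lemma rotMat_eq_one {φ : ℝ} (hsin : sin φ = 0) (hcos : 0 < cos φ) : rotMat φ = 1 := by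
  have hcos_sq : cos φ ^ 2 = 1 := by nlinarith [sin_sq_add_cos_sq φ]
  have hcos_one : cos φ = 1 := by nlinarith
  rw [rotMat, hsin, hcos_one, one_fin_two, neg_zero]

lemma rotMat_mul_diag_mul_rotMat_neg (θ p q : ℝ) :
    rotMat θ * !![p, 0; 0, q] * rotMat (-θ) =
      !![p * cos θ ^ 2 + q * sin θ ^ 2, (p - q) * sin θ * cos θ;
        (p - q) * sin θ * cos θ, p * sin θ ^ 2 + q * cos θ ^ 2] := by
  simp only [rotMat, cos_neg, sin_neg, mul_fin_two]
  ext i j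
  fin_cases i <;> fin_cases j <;> simp <;> ring

lemma rotMat_eq_one_of_diag_mul_symm_mul_diag_eq {d₁ d₂ e₁ e₂ p s r φ : ℝ} (hd₁ : 0 < d₁)
    (hd₂ : 0 < d₂) (he₁ : 0 < e₁) (he₂ : 0 < e₂) (hp : 0 < p)
    (h : !![d₁, 0; 0, d₂] * !![p, s; s, r] * !![e₁, 0; 0, e₂] = rotMat φ) : rotMat φ = 1 := by
  rw [mul_fin_two, mul_fin_two] at h
  have h00 : d₁ * p * e₁ = cos φ := by simpa [rotMat] using congr_fun (congr_fun h 0) 0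
  have h01 : d₁ * s * e₂ = -sin φ := by simpa [rotMat] using congr_fun (congr_fun h 0) 1
  have h10 : d₂ * s * e₁ = sin φ := by simpa [rotMat] using congr_fun (congr_fun h 1) 0
  have hs : s = 0 := by
    have : s * (d₁ * e₂ + d₂ * e₁) = 0 := by linear_combination h01 + h10
    exact (mul_eq_zero.1 this).resolve_right (by positivity)
  refine rotMat_eq_one (by rw [← h10, hs]; ring) ?_
  rw [← h00]
  positivity

theorem stmt_11 (t₁ t₂ t₃ : ℝ)
    (A₁ : Matrix (Fin 2) (Fin 2) ℝ) (hA₁ : A₁ = !![1, 0; 0, Real.exp t₁])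
    (A₂ : Matrix (Fin 2) (Fin 2) ℝ)
    (hA₂ : A₂ = rotMat (π / 4) * !![1, 0; 0, Real.exp t₂] * rotMat (-(π / 4)))
    (A₃ : Matrix (Fin 2) (Fin 2) ℝ) (hA₃ : A₃ = !![Real.exp t₃, 0; 0, 1])
    (hrot : ∃ φ : ℝ, A₃ * A₂ * A₁ = rotMat φ) :
    A₃ * A₂ * A₁ = 1 := by
  obtain ⟨φ, h⟩ := hrot
  subst hA₁ hA₂ hA₃
  rw [rotMat_mul_diag_mul_rotMat_neg] at h ⊢
  rw [h]
  refine rotMat_eq_one_of_diag_mul_symm_mul_diag_eq (exp_pos t₃) one_pos one_pos (exp_pos t₁)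
    ?_ h
  have hcos : 0 < cos (π / 4) := cos_pos_of_mem_Ioo ⟨by linarith [pi_pos], by linarith [pi_pos]⟩
  positivity
end
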